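/- arXiv:2102.02739 — 8 statements merged into one kernel-verified Lean document; each statement's English description precedes it below -/
import Mathlib

section
/- The monoid generated by the matrices S and G inside SL(3,ℤ) is free on the two generators S and G; that is, two distinct words in the letters S and G yield distinct matrix products. -/
/-- `true` encodes the letter `S`, `false` encodes the letter `G`. -/
def SGletter : Bool → Matrix (Fin 3) (Fin 3) ℤ
  | true => !![3, -2, 1; 2, -1, 1; 0, 0, 1]
  | false => !![1, 1, 0; 0, 1, 0; 0, 0, 1]

/-!
Ping-pong on the orbit of `v = (1, 1, 1)`, written `(x, y, z)`. On the cone `z = 1, 1 ≤ y ≤ x`,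
`S` keeps `x - y` and raises `y` by `2 (x - y) + 1`, landing where `y > 2 (x - y) + 1`, while `G`
keeps `y` and replaces `x - y` by `x`, landing where `y ≤ x - y`. These two regions are disjoint
and miss `v`, so the first letter of a word is read off its product applied to `v`; the letters
are invertible, so it can be cancelled and the argument repeated.
-/

open Set Function Matrix

section PingPong

variable {M X α : Type*} [Monoid M] [MulAction M X] (f : α → M) {x₀ : X} {C : Set X}
  {P : α → Set X}

theorem list_prod_map_smul_mem (hx₀ : x₀ ∈ C) (hC : ∀ a, MapsTo (f a • ·) C C) :
    ∀ w : List α, (w.map f).prod • x₀ ∈ C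
  | [] => by simpa using hx₀
  | a :: w => by
    rw [List.map_cons, List.prod_cons, mul_smul]
    exact hC a (list_prod_map_smul_mem hx₀ hC w)

theorem injective_list_prod_map_of_ping_pong (hf : ∀ a, IsLeftRegular (f a)) (hx₀ : x₀ ∈ C)
    (hx₀P : ∀ a, x₀ ∉ P a) (hPC : ∀ a, P a ⊆ C) (hP : Pairwise (Disjoint on P))
    (hmaps : ∀ a, MapsTo (f a • ·) C (P a)) :
    Injective fun w : List α => (w.map f).prod := by
  have hC : ∀ a, MapsTo (f a • ·) C C := fun a => (hmaps a).mono_right (hPC a)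
  have mem_first : ∀ a w, ((a :: w).map f).prod • x₀ ∈ P a := fun a w => by
    rw [List.map_cons, List.prod_cons, mul_smul]
    exact hmaps a (list_prod_map_smul_mem f hx₀ hC w)
  have cons_ne_one : ∀ a w, ((a :: w).map f).prod ≠ 1 := fun a w h =>
    hx₀P a (by simpa only [h, one_smul] using mem_first a w)
  intro w w' (h : (w.map f).prod = (w'.map f).prod)
  induction w generalizing w' with
  | nil =>
    cases w' with
    | nil => rfl
    | cons b w' => exact absurd h.symm (cons_ne_one b w')
  | cons a w ih =>
    cases w' with
    | nil => exact absurd h (cons_ne_one a w)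
    | cons b w' =>
      obtain rfl : a = b := by
        by_contra hab
        exact (hP hab).ne_of_mem (mem_first a w) (h ▸ mem_first b w') rfl
      simp only [List.map_cons, List.prod_cons] at h
      rw [ih (hf a h)]

end PingPong

theorem isLeftRegular_SGletter (a : Bool) : IsLeftRegular (SGletter a) := by
  have hdet : (SGletter a).det = 1 := by
    cases a <;> simp [SGletter, det_fin_three]
  exact ((isUnit_iff_isUnit_det _).2 (hdet ▸ isUnit_one)).isRegular.left

theorem SGletter_true_mulVec (v : Fin 3 → ℤ) :
    SGletter true *ᵥ v = ![3 * v 0 - 2 * v 1 + v 2, 2 * v 0 - v 1 + v 2, v 2] := by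
  ext i
  fin_cases i <;> simp [SGletter, mulVec, dotProduct, Fin.sum_univ_three] <;> ring

theorem SGletter_false_mulVec (v : Fin 3 → ℤ) :
    SGletter false *ᵥ v = ![v 0 + v 1, v 1, v 2] := by
  ext i
  fin_cases i <;> simp [SGletter, mulVec, dotProduct, Fin.sum_univ_three]

def SGcone : Set (Fin 3 → ℤ) := {v | v 2 = 1 ∧ 1 ≤ v 1 ∧ v 1 ≤ v 0}

def SGregion : Bool → Set (Fin 3 → ℤ)
  | true => SGcone ∩ {v | 2 * (v 0 - v 1) + 1 < v 1}
  | false => SGcone ∩ {v | v 1 ≤ v 0 - v 1}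

theorem ones_mem_SGcone : ![1, 1, 1] ∈ SGcone := by
  simp [SGcone]

theorem ones_notMem_SGregion (a : Bool) : ![1, 1, 1] ∉ SGregion a := by
  cases a <;> simp [SGregion]

theorem SGregion_subset_SGcone (a : Bool) : SGregion a ⊆ SGcone := by
  cases a <;> exact inter_subset_left

theorem SGregion_pairwise_disjoint : Pairwise (Disjoint on SGregion) := by
  have h : Disjoint (SGregion true) (SGregion false) :=
    disjoint_left.2 fun v ⟨⟨_, hy, _⟩, h₁⟩ ⟨_, h₂⟩ => by
      simp only [mem_ofPred_eq] at h₁ h₂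
      omega
  rintro (_ | _) (_ | _) hab
  · exact absurd rfl hab
  · exact h.symm
  · exact h
  · exact absurd rfl hab

theorem mapsTo_SGletter_SGregion (a : Bool) :
    MapsTo (SGletter a • ·) SGcone (SGregion a) := by
  rintro v ⟨hz, hy, hx⟩
  cases a <;> simp [SGregion, SGcone, SGletter_true_mulVec, SGletter_false_mulVec] <;> omega

theorem monoid_free_on_S_G :
    ∀ w w' : List Bool, (w.map SGletter).prod = (w'.map SGletter).prod → w = w' :=
  fun _ _ h => injective_list_prod_map_of_ping_pong SGletter isLeftRegular_SGletter
    ones_mem_SGcone ones_notMem_SGregion SGregion_subset_SGcone SGregion_pairwise_disjoint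
    mapsTo_SGletter_SGregion h
end

section
/- With G and S as the affine maps Ĝ(x,y)=(x+y,y) and Ŝ(x,y)=(3x−2y+1,2x−y+1) on ℝ², and X₁ = {(x,y) : x > −1/2, 0 < y < x/2 + 1/4}, X₂ = {(x,y) : x > −1/2, 2x/3 + 1/3 < y < x + 1/2}, one has X₁ ∩ X₂ = ∅, Ĝ(X₁ ∪ X₂) ⊆ X₁, and Ŝ(X₁ ∪ X₂) ⊆ X₂. -/
/-! Both sets lie in the open wedge `W = {x > -1/2, 0 < y < x + 1/2}` at the common fixed point
`(-1/2, 0)` of `Ĝ` and `Ŝ`, and each map sends the whole wedge into its own set. Every step is a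
linear inequality; `X₁` and `X₂` are disjoint because on `x > -1/2` the upper edge `x/2 + 1/4` of
`X₁` lies below the lower edge `2x/3 + 1/3` of `X₂`. -/

def GhatR (p : ℝ × ℝ) : ℝ × ℝ := (p.1 + p.2, p.2)

def ShatR (p : ℝ × ℝ) : ℝ × ℝ := (3 * p.1 - 2 * p.2 + 1, 2 * p.1 - p.2 + 1)

def X1 : Set (ℝ × ℝ) := {p | p.1 > -1/2 ∧ 0 < p.2 ∧ p.2 < p.1 / 2 + 1/4}

def X2 : Set (ℝ × ℝ) := {p | p.1 > -1/2 ∧ 2 * p.1 / 3 + 1/3 < p.2 ∧ p.2 < p.1 + 1/2}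

def pingPongWedge : Set (ℝ × ℝ) := {p | p.1 > -1/2 ∧ 0 < p.2 ∧ p.2 < p.1 + 1/2}

theorem X1_subset_pingPongWedge : X1 ⊆ pingPongWedge := by
  rintro ⟨x, y⟩ ⟨hx, hy₀, hy₁⟩
  exact ⟨hx, hy₀, by linarith⟩

theorem X2_subset_pingPongWedge : X2 ⊆ pingPongWedge := by
  rintro ⟨x, y⟩ ⟨hx, hy₀, hy₁⟩
  exact ⟨hx, by linarith, hy₁⟩

theorem disjoint_X1_X2 : Disjoint X1 X2 := by
  rw [Set.disjoint_left]
  rintro ⟨x, y⟩ ⟨hx, -, hy₁⟩ ⟨-, hy₂, -⟩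
  linarith

theorem mapsTo_GhatR_pingPongWedge : Set.MapsTo GhatR pingPongWedge X1 := by
  rintro ⟨x, y⟩ ⟨hx, hy₀, hy₁⟩
  refine ⟨?_, ?_, ?_⟩ <;> dsimp only [GhatR] <;> linarith

theorem mapsTo_ShatR_pingPongWedge : Set.MapsTo ShatR pingPongWedge X2 := by
  rintro ⟨x, y⟩ ⟨hx, hy₀, hy₁⟩
  refine ⟨?_, ?_, ?_⟩ <;> dsimp only [ShatR] <;> linarith

theorem ping_pong_sets :
    X1 ∩ X2 = ∅ ∧ GhatR '' (X1 ∪ X2) ⊆ X1 ∧ ShatR '' (X1 ∪ X2) ⊆ X2 := by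
  have hW : X1 ∪ X2 ⊆ pingPongWedge :=
    Set.union_subset X1_subset_pingPongWedge X2_subset_pingPongWedge
  exact ⟨disjoint_X1_X2.inter_eq,
    (mapsTo_GhatR_pingPongWedge.mono_left hW).image_subset,
    (mapsTo_ShatR_pingPongWedge.mono_left hW).image_subset⟩
end

section
/- For every natural number i ≥ 0, (SG)ⁱ = [[a(i), b(i), c(i)],[d(i), a(i−1), b(i)],[0,0,1]], where a, b, d satisfy the recurrence u(n) = 4u(n−1) − u(n−2) with a(0)=1, a(1)=3, b(0)=0, b(1)=1, d(0)=0, d(1)=2 (and a(−1)=1), and c satisfies c(n) = 5c(n−1) − 5c(n−2) + c(n−3) with c(1)=1 and c(k)=0 for k ≤ 0. -/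
/-!
`S * G = !![3, 1, 1; 2, 1, 1; 0, 0, 1]` has characteristic polynomial
`(X - 1) * (X ^ 2 - 4 * X + 1) = X ^ 3 - 5 * X ^ 2 + 5 * X - 1`, so by Cayley–Hamilton the powers
`(S * G) ^ i` satisfy the cubic recurrence `u (n + 3) = 5 u (n + 2) - 5 u (n + 1) + u n`. So do
`c`, the constants, and `a`, `b`, `d`, whose quadratic recurrence is that of the factor
`X ^ 2 - 4 * X + 1`. Both sides of the formula therefore solve the same cubic recurrence, and it
remains to compare them for `i = 0, 1, 2`.
-/

section LinearRecurrence

variable {A : Type*} [AddCommGroup A] {p q r : ℤ}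

def IsLinearRecurrence3 (p q r : ℤ) (u : ℕ → A) : Prop :=
  ∀ n, u (n + 3) = p • u (n + 2) + q • u (n + 1) + r • u n

theorem IsLinearRecurrence3.eq_of_eq_init {u v : ℕ → A}
    (hu : IsLinearRecurrence3 p q r u) (hv : IsLinearRecurrence3 p q r v)
    (h0 : u 0 = v 0) (h1 : u 1 = v 1) (h2 : u 2 = v 2) : u = v := by
  funext n
  induction n using Nat.strong_induction_on with
  | _ n ih =>
    match n with
    | 0 => exact h0
    | 1 => exact h1
    | 2 => exact h2
    | n + 3 => rw [hu, hv, ih n (by omega), ih (n + 1) (by omega), ih (n + 2) (by omega)]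

theorem isLinearRecurrence3_const (x : A) (h : p + q + r = 1) :
    IsLinearRecurrence3 p q r fun _ => x := by
  intro n
  rw [← add_smul, ← add_smul, h, one_smul]

theorem isLinearRecurrence3_pow {R : Type*} [Ring R] {M : R}
    (hM : M ^ 3 = p • M ^ 2 + q • M + r • (1 : R)) :
    IsLinearRecurrence3 p q r (M ^ ·) := by
  intro n
  simp only [pow_add M n, hM, mul_add, mul_smul_comm, pow_one, mul_one]

theorem isLinearRecurrence3_matrix {m n : Type*} {N : ℕ → Matrix m n A}
    (h : ∀ i j, IsLinearRecurrence3 p q r fun k => N k i j) :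
    IsLinearRecurrence3 p q r N :=
  fun k => Matrix.ext fun i j => h i j k

end LinearRecurrence

section IntegerSequences

variable {u : ℤ → ℤ} {k : ℤ}

theorem isLinearRecurrence3_of_int {p q r : ℤ}
    (h : ∀ n, k ≤ n → u n = p * u (n - 1) + q * u (n - 2) + r * u (n - 3)) (hk : k ≤ 3) :
    IsLinearRecurrence3 p q r fun i : ℕ => u i := by
  intro i
  have := h (i + 3) (by omega)
  push_cast
  simpa only [smul_eq_mul, add_sub_cancel_right, show (i : ℤ) + 3 - 1 = i + 2 by ring,
    show (i : ℤ) + 3 - 2 = i + 1 by ring] using this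

/-- `X ^ 3 - (t + 1) * X ^ 2 + (t + 1) * X - 1 = (X - 1) * (X ^ 2 - t * X + 1)`. -/
theorem isLinearRecurrence3_of_int_of_trace {t : ℤ}
    (h : ∀ n, k ≤ n → u n = t * u (n - 1) - u (n - 2)) (m : ℤ) (hm : k + m ≤ 2) :
    IsLinearRecurrence3 (t + 1) (-(t + 1)) 1 fun i : ℕ => u (i - m) := by
  intro i
  have h3 := h (i + 3 - m) (by omega)
  have h2 := h (i + 2 - m) (by omega)
  push_cast
  simp only [smul_eq_mul]
  ring_nf at h3 h2 ⊢
  linarith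

end IntegerSequences

def powFormula (a b c d : ℤ → ℤ) (i : ℕ) : Matrix (Fin 3) (Fin 3) ℤ :=
  !![a i, b i, c i; d i, a ((i : ℤ) - 1), b i; 0, 0, 1]

theorem isLinearRecurrence3_powFormula {a b c d : ℤ → ℤ}
    (ha : ∀ n : ℤ, 1 ≤ n → a n = 4 * a (n - 1) - a (n - 2))
    (hb : ∀ n : ℤ, 2 ≤ n → b n = 4 * b (n - 1) - b (n - 2))
    (hd : ∀ n : ℤ, 2 ≤ n → d n = 4 * d (n - 1) - d (n - 2))
    (hc : ∀ n : ℤ, 2 ≤ n → c n = 5 * c (n - 1) - 5 * c (n - 2) + c (n - 3)) :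
    IsLinearRecurrence3 5 (-5) 1 (powFormula a b c d) := by
  have hA := isLinearRecurrence3_of_int_of_trace ha 0 (by norm_num)
  have hA' := isLinearRecurrence3_of_int_of_trace ha 1 le_rfl
  have hB := isLinearRecurrence3_of_int_of_trace hb 0 le_rfl
  have hD := isLinearRecurrence3_of_int_of_trace hd 0 le_rfl
  have hC : IsLinearRecurrence3 5 (-5) 1 fun i : ℕ => c i :=
    isLinearRecurrence3_of_int (k := 2) (fun n hn => by rw [hc n hn]; ring) (by norm_num)
  norm_num at hA hA' hB hD
  refine isLinearRecurrence3_matrix fun r s => ?_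
  fin_cases r <;> fin_cases s
  all_goals first
    | exact isLinearRecurrence3_const _ (by norm_num)
    | assumption

theorem SG_pow_formula (a b c d : ℤ → ℤ)
    (ha : ∀ n : ℤ, 2 ≤ n → a n = 4 * a (n - 1) - a (n - 2))
    (ha0 : a 0 = 1) (ha1 : a 1 = 3) (haneg : a (-1) = 1)
    (hb : ∀ n : ℤ, 2 ≤ n → b n = 4 * b (n - 1) - b (n - 2))
    (hb0 : b 0 = 0) (hb1 : b 1 = 1)
    (hd : ∀ n : ℤ, 2 ≤ n → d n = 4 * d (n - 1) - d (n - 2))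
    (hd0 : d 0 = 0) (hd1 : d 1 = 2)
    (hc : ∀ n : ℤ, 2 ≤ n → c n = 5 * c (n - 1) - 5 * c (n - 2) + c (n - 3))
    (hc1 : c 1 = 1) (hc0 : ∀ k : ℤ, k ≤ 0 → c k = 0) :
    ∀ i : ℕ,
      ((!![3, -2, 1; 2, -1, 1; 0, 0, 1] : Matrix (Fin 3) (Fin 3) ℤ) *
        (!![1, 1, 0; 0, 1, 0; 0, 0, 1] : Matrix (Fin 3) (Fin 3) ℤ)) ^ i =
      !![a i, b i, c i;
         d i, a ((i : ℤ) - 1), b i;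
         0, 0, 1] := by
  have hM : IsLinearRecurrence3 5 (-5) 1 fun i : ℕ =>
      ((!![3, -2, 1; 2, -1, 1; 0, 0, 1] : Matrix (Fin 3) (Fin 3) ℤ) *
        (!![1, 1, 0; 0, 1, 0; 0, 0, 1] : Matrix (Fin 3) (Fin 3) ℤ)) ^ i :=
    isLinearRecurrence3_pow (by decide)
  have ha' : ∀ n : ℤ, 1 ≤ n → a n = 4 * a (n - 1) - a (n - 2) := by
    intro n hn
    rcases hn.eq_or_lt with rfl | hn
    · norm_num [ha0, ha1, haneg]
    · exact ha n hn
  have hN := isLinearRecurrence3_powFormula ha' hb hd hc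
  have ha2 : a 2 = 11 := by norm_num [ha 2 le_rfl, ha0, ha1]
  have hb2 : b 2 = 4 := by norm_num [hb 2 le_rfl, hb0, hb1]
  have hd2 : d 2 = 8 := by norm_num [hd 2 le_rfl, hd0, hd1]
  have hc2 : c 2 = 5 := by norm_num [hc 2 le_rfl, hc1, hc0]
  intro i
  refine congrFun (hM.eq_of_eq_init hN ?_ ?_ ?_) i <;>
    ext r s <;> fin_cases r <;> fin_cases s <;>
    simp [powFormula, pow_two, Matrix.mul_apply, Fin.sum_univ_three, ha0, ha1, haneg, hb0, hb1,
      hd0, hd1, hc1, hc0, ha2, hb2, hd2, hc2]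
end

section
/- Let F : ℕ × ℕ → ℕ be the matrix defined by: F(n,k) > 0 with n,k ≥ 1 if and only if (n,k) is reachable from (1,1) by finitely many applications of the maps (x,y) ↦ (x+y, y) and (x,y) ↦ (3x−2y+1, 2x−y+1), together with F(0,0)=1. Then F is a 0–1 matrix, i.e., F(n,k) ∈ {0,1} for all n,k, where F(n,k) counts the number of such words reaching (n,k). -/
/-!
Both maps send the cone `1 ≤ y ≤ x` into itself, `Ĝ` is injective, and `Ŝ` is injective
(its linear part has determinant `1`). On the cone their images are separated by the line
`x = 2y`: `Ĝ` lands in `2y ≤ x`, `Ŝ` in `x < 2y`. Since `(1,1)` lies in neither image, the last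
letter of a word is read off from `w (1,1)` and can be peeled off, so `w ↦ w (1,1)` is injective
and every fibre has at most one element.
-/

def Ghat (p : ℤ × ℤ) : ℤ × ℤ := (p.1 + p.2, p.2)

def Shat (p : ℤ × ℤ) : ℤ × ℤ := (3 * p.1 - 2 * p.2 + 1, 2 * p.1 - p.2 + 1)

/-- `true` encodes `Ŝ`, `false` encodes `Ĝ`; a word acts by composition. -/
def applyWord (w : List Bool) (p : ℤ × ℤ) : ℤ × ℤ :=
  w.foldr (fun b q => if b then Shat q else Ghat q) p

def cone : Set (ℤ × ℤ) := {p | 1 ≤ p.2 ∧ p.2 ≤ p.1}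

@[simp]
lemma mem_cone {p : ℤ × ℤ} : p ∈ cone ↔ 1 ≤ p.2 ∧ p.2 ≤ p.1 := Iff.rfl

section Maps

variable {p q : ℤ × ℤ}

lemma Ghat_injective : Function.Injective Ghat := by
  rintro ⟨a, b⟩ ⟨c, d⟩ h
  simp only [Ghat, Prod.mk.injEq] at h
  ext <;> omega

lemma Shat_injective : Function.Injective Shat := by
  rintro ⟨a, b⟩ ⟨c, d⟩ h
  simp only [Shat, Prod.mk.injEq] at h
  ext <;> omega

lemma Ghat_mapsTo_cone : Set.MapsTo Ghat cone cone := by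
  rintro ⟨a, b⟩ hp
  simp only [mem_cone, Ghat] at *
  omega

lemma Shat_mapsTo_cone : Set.MapsTo Shat cone cone := by
  rintro ⟨a, b⟩ hp
  simp only [mem_cone, Shat] at *
  omega

lemma two_mul_snd_le_fst_Ghat (hp : p ∈ cone) : 2 * (Ghat p).2 ≤ (Ghat p).1 := by
  simp only [mem_cone, Ghat] at *
  omega

lemma fst_Shat_lt_two_mul_snd (hp : p ∈ cone) : (Shat p).1 < 2 * (Shat p).2 := by
  simp only [mem_cone, Shat] at *
  omega

lemma Ghat_ne_Shat (hp : p ∈ cone) (hq : q ∈ cone) : Ghat p ≠ Shat q := fun h => by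
  have hG := two_mul_snd_le_fst_Ghat hp
  rw [h] at hG
  have hS := fst_Shat_lt_two_mul_snd hq
  omega

lemma Ghat_ne_one_one (hp : p ∈ cone) : Ghat p ≠ (1, 1) := fun h => by
  have := two_mul_snd_le_fst_Ghat hp
  simp only [h] at this
  omega

lemma Shat_ne_one_one (hp : p ∈ cone) : Shat p ≠ (1, 1) := fun h => by
  simp only [mem_cone, Shat, Prod.mk.injEq] at hp h
  omega

end Maps

section Words

@[simp]
lemma applyWord_nil (p : ℤ × ℤ) : applyWord [] p = p := rfl

@[simp]
lemma applyWord_cons_true (w : List Bool) (p : ℤ × ℤ) :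
    applyWord (true :: w) p = Shat (applyWord w p) := rfl

@[simp]
lemma applyWord_cons_false (w : List Bool) (p : ℤ × ℤ) :
    applyWord (false :: w) p = Ghat (applyWord w p) := rfl

lemma applyWord_mem_cone (w : List Bool) {p : ℤ × ℤ} (hp : p ∈ cone) :
    applyWord w p ∈ cone := by
  induction w with
  | nil => exact hp
  | cons b w ih =>
    cases b
    · exact Ghat_mapsTo_cone ih
    · exact Shat_mapsTo_cone ih

lemma one_one_mem_cone : ((1, 1) : ℤ × ℤ) ∈ cone := by
  simp

lemma applyWord_cons_ne_one_one (b : Bool) (w : List Bool) :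
    applyWord (b :: w) (1, 1) ≠ (1, 1) := by
  have hw := applyWord_mem_cone w one_one_mem_cone
  cases b
  · exact Ghat_ne_one_one hw
  · exact Shat_ne_one_one hw

lemma applyWord_one_one_injective : Function.Injective (applyWord · ((1, 1) : ℤ × ℤ)) := by
  intro w₁
  induction w₁ with
  | nil =>
    rintro (_ | ⟨b, w₂⟩) h
    · rfl
    · exact absurd h.symm (applyWord_cons_ne_one_one b w₂)
  | cons b₁ w₁ ih =>
    rintro (_ | ⟨b₂, w₂⟩) h
    · exact absurd h (applyWord_cons_ne_one_one b₁ w₁)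
    have h₁ := applyWord_mem_cone w₁ one_one_mem_cone
    have h₂ := applyWord_mem_cone w₂ one_one_mem_cone
    cases b₁ <;> cases b₂ <;> simp only [applyWord_cons_true, applyWord_cons_false] at h
    · rw [ih (Ghat_injective h)]
    · exact absurd h (Ghat_ne_Shat h₁ h₂)
    · exact absurd h.symm (Ghat_ne_Shat h₂ h₁)
    · rw [ih (Shat_injective h)]

lemma card_applyWord_fiber_le_one (p : ℤ × ℤ) :
    Nat.card {w : List Bool // applyWord w (1, 1) = p} ≤ 1 := by
  have : Subsingleton {w : List Bool // applyWord w (1, 1) = p} :=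
    ⟨fun ⟨_, h₁⟩ ⟨_, h₂⟩ => Subtype.ext (applyWord_one_one_injective (h₁.trans h₂.symm))⟩
  exact Finite.card_le_one_iff_subsingleton.mpr this

end Words

theorem F_is_zero_one (F : ℕ → ℕ → ℕ)
    (hpos : ∀ n k : ℕ, 1 ≤ n → 1 ≤ k →
      F n k = Nat.card {w : List Bool // applyWord w (1, 1) = ((n : ℤ), (k : ℤ))})
    (h00 : F 0 0 = 1)
    (h0k : ∀ k : ℕ, 1 ≤ k → F 0 k = 0)
    (hn0 : ∀ n : ℕ, 1 ≤ n → F n 0 = 0) :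
    ∀ n k : ℕ, F n k = 0 ∨ F n k = 1 := by
  rintro (_ | n) (_ | k)
  · exact .inr h00
  · exact .inl (h0k _ k.succ_pos)
  · exact .inl (hn0 _ n.succ_pos)
  · rw [← Nat.le_one_iff_eq_zero_or_eq_one, hpos _ _ n.succ_pos k.succ_pos]
    exact card_applyWord_fiber_le_one _
end

section
/- For all integers n ≥ 1 and k ≥ 1, if k divides n then F(n,k) = 1, i.e., the point (n,k) is reachable from (1,1) under the maps (x,y) ↦ (x+y, y) and (x,y) ↦ (3x−2y+1, 2x−y+1). -/
/-- `(n,k)` is reachable from `(1,1)` by some word in `Ĝ, Ŝ`. -/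
def Reachable (p : ℤ × ℤ) : Prop := ∃ w : List Bool, applyWord w (1, 1) = p

/-! `Ŝ` moves along the diagonal, `Ŝ (m, m) = (m + 1, m + 1)`, so every `(k, k)` with `k ≥ 1` is
reachable; from there `j` applications of `Ĝ` reach `(k + j k, k)`, i.e. every positive multiple
of `k` in the first coordinate. -/

namespace Reachable

theorem one_one : Reachable (1, 1) := ⟨[], rfl⟩

theorem ghat {p : ℤ × ℤ} (hp : Reachable p) : Reachable (Ghat p) := by
  obtain ⟨w, rfl⟩ := hp
  exact ⟨false :: w, rfl⟩

theorem shat {p : ℤ × ℤ} (hp : Reachable p) : Reachable (Shat p) := by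
  obtain ⟨w, rfl⟩ := hp
  exact ⟨true :: w, rfl⟩

theorem diag {m : ℤ} (hm : 1 ≤ m) : Reachable (m, m) := by
  induction m, hm using Int.leInduction with
  | base => exact one_one
  | succ m _ ih =>
    have hS : Shat (m, m) = (m + 1, m + 1) := by
      rw [Shat]
      congr 1 <;> ring
    exact hS ▸ ih.shat

theorem add_mul_snd {x y : ℤ} (hp : Reachable (x, y)) {j : ℤ} (hj : 0 ≤ j) :
    Reachable (x + j * y, y) := by
  induction j, hj using Int.leInduction with
  | base => simpa using hp
  | succ j _ ih =>
    have hG : Ghat (x + j * y, y) = (x + (j + 1) * y, y) := by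
      rw [Ghat]
      congr 1
      ring
    exact hG ▸ ih.ghat

end Reachable

theorem divisor_reachable (n k : ℤ) (hn : 1 ≤ n) (hk : 1 ≤ k) (hdvd : k ∣ n) :
    Reachable (n, k) := by
  obtain ⟨q, rfl⟩ := hdvd
  have hq : 1 ≤ q := by nlinarith
  have h := (Reachable.diag hk).add_mul_snd (j := q - 1) (by omega)
  rwa [show k + (q - 1) * k = k * q by ring] at h
end

section
/- For every n ≥ 1 and every x with 0 ≤ x ≤ n−1, if there exists a divisor h of x such that (2x+1) divides (2n−2h+1), then F(n, n−x) = 1, i.e., the pair (n, n−x) is reachable from (1,1) under the maps Ĝ(x,y)=(x+y,y) and Ŝ(x,y)=(3x−2y+1,2x−y+1). (For x = 0 take h = 0 with the convention that the condition holds and (n,n) is reachable.) -/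
/-!
From `(h, h) = Ŝ^(h-1) (1, 1)`, applying `Ĝ` `x / h` times gives `(h + x, h)`.
On pairs with difference `x`, `Ŝ` adds `2x + 1` to both coordinates, so `s` more applications
of `Ŝ` reach `(n, n - x)` exactly when `2n - 2h + 1 = (2x + 1)(2s + 1)`; the cofactor of
`2x + 1` is odd because `2n - 2h + 1` is, and nonnegative because `h ≤ x` and `n ≥ 1`.
-/

theorem Ghat_iterate_apply (m : ℕ) (a b : ℤ) : Ghat^[m] (a, b) = (a + m * b, b) := by
  induction m with
  | zero => simp
  | succ m ih =>
    rw [Function.iterate_succ_apply', ih, Ghat]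
    push_cast
    congr 1
    ring

theorem Shat_iterate_apply (s : ℕ) (b x : ℤ) :
    Shat^[s] (b + x, b) = (b + s * (2 * x + 1) + x, b + s * (2 * x + 1)) := by
  induction s with
  | zero => simp
  | succ s ih =>
    rw [Function.iterate_succ_apply', ih, Shat]
    push_cast
    ext <;> simp only <;> ring

namespace Reachable

theorem ghat_iterate {p : ℤ × ℤ} (hp : Reachable p) (m : ℕ) : Reachable (Ghat^[m] p) := by
  induction m with
  | zero => exact hp
  | succ m ih => rw [Function.iterate_succ_apply']; exact ih.ghat

theorem shat_iterate {p : ℤ × ℤ} (hp : Reachable p) (s : ℕ) : Reachable (Shat^[s] p) := by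
  induction s with
  | zero => exact hp
  | succ s ih => rw [Function.iterate_succ_apply']; exact ih.shat

theorem diag_s11 {a : ℤ} (ha : 1 ≤ a) : Reachable (a, a) := by
  lift a - 1 to ℕ using (by omega) with k hk
  have := one_one.shat_iterate k
  rw [show ((1 : ℤ), (1 : ℤ)) = (1 + 0, 1) by simp, Shat_iterate_apply] at this
  convert this using 2 <;> omega

end Reachable

theorem divisor_condition_reachable_general (n x : ℤ) (hn : 1 ≤ n) (hx : 0 ≤ x)
    (h : ∃ h : ℤ, 0 ≤ h ∧ h ∣ x ∧ (2 * x + 1) ∣ (2 * n - 2 * h + 1)) :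
    Reachable (n, n - x) := by
  obtain ⟨h, hh0, ⟨m, hm⟩, t, ht⟩ := h
  rcases hx.eq_or_lt with rfl | hx
  · simpa using Reachable.diag_s11 hn
  have hh : 1 ≤ h := by
    rcases hh0.eq_or_lt with rfl | hh
    · simp at hm; omega
    · exact hh
  lift m to ℕ using (by nlinarith)
  have ht_odd : Odd ((2 * x + 1) * t) := ht ▸ ⟨n - h, by ring⟩
  obtain ⟨s, rfl⟩ := (Int.odd_mul.mp ht_odd).2
  lift s to ℕ using (by nlinarith [Int.le_of_dvd hx ⟨m, hm⟩])
  have := ((Reachable.diag_s11 hh).ghat_iterate m).shat_iterate s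
  rw [Ghat_iterate_apply, show h + m * h = h + x by rw [hm]; ring, Shat_iterate_apply] at this
  convert this using 2 <;> linarith

theorem divisor_condition_reachable (n x : ℤ) (hn : 1 ≤ n) (hx : 0 ≤ x) (hxn : x ≤ n - 1)
    (h : ∃ h : ℤ, 0 ≤ h ∧ h ∣ x ∧ (2 * x + 1) ∣ (2 * n - 2 * h + 1)) :
    Reachable (n, n - x) :=
  divisor_condition_reachable_general n x hn hx h
end

section
/- For every n ≥ 1, the number a(n) of integers x with 0 ≤ x ≤ n−1 admitting a divisor h of x with (2x+1) | (2n−2h+1) (counting x = 0) satisfies a(n) ≥ τ(n) + τ(2n−1) + τ_o(n+1) − 3 − [n ≡ 0 mod 2] − [n ≡ −1 mod 3], where τ is the number-of-divisors function, τ_o counts odd divisors, and the brackets are indicator functions. -/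
/-!
Three families of good `x` come with explicit witnesses `h`. A proper divisor `d` of `n` gives
`x = n - d` with `h = d`, since then `2n - 2h + 1 = 2x + 1`. An odd divisor `2x + 1 > 1` of
`2n - 1` gives `x` with `h = 1`. An odd divisor `2x + 1 > 1` of `n + 1` gives `x` with `h = x`,
since `2n - 2x + 1 = 2(n + 1) - (2x + 1)`. Each family has one element fewer than the
corresponding divisor count, and pairwise the families meet in at most `n - 1`, in `n / 2` (only for
even `n`) and in `1` (only for `n ≡ 2 mod 3`), so inclusion–exclusion gives the bound.
-/

open Finset

open Classical in
/-- `a(n)`: one (for `x = 0`) plus the number of `1 ≤ x ≤ n-1` admitting a divisor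
`h ≥ 1` of `x` with `2x+1 ∣ 2n-2h+1`. -/
noncomputable def A (n : ℕ) : ℕ :=
  1 + ((Finset.Ioo 0 n).filter
    (fun x => ∃ h ∈ Finset.Icc 1 x, h ∣ x ∧ (2 * x + 1) ∣ (2 * n - 2 * h + 1))).card

theorem Finset.card_add_card_add_card_le {α : Type*} [DecidableEq α] (s t u : Finset α) :
    #s + #t + #u ≤ #(s ∪ t ∪ u) + #(s ∩ t) + #(s ∩ u) + #(t ∩ u) := by
  have hst := card_union_add_card_inter s t
  have hstu := card_union_add_card_inter (s ∪ t) u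
  have hinter : #((s ∪ t) ∩ u) ≤ #(s ∩ u) + #(t ∩ u) := by
    rw [union_inter_distrib_right]
    exact card_union_le _ _
  omega

theorem Finset.card_le_ite_of_forall_eq {α : Type*} {s : Finset α} {a : α} {p : Prop}
    [Decidable p] (h : ∀ x ∈ s, x = a ∧ p) : #s ≤ if p then 1 else 0 := by
  split_ifs with hp
  · exact card_le_one.mpr fun x hx y hy => (h x hx).1.trans (h y hy).1.symm
  · exact (card_eq_zero.mpr (eq_empty_of_forall_notMem fun x hx => hp (h x hx).2)).le

namespace Nat

theorem two_mul_le_of_mem_properDivisors {n d : ℕ} (hd : d ∈ n.properDivisors) :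
    2 * d ≤ n := by
  obtain ⟨⟨k, rfl⟩, hlt⟩ := mem_properDivisors.mp hd
  have hk : 2 ≤ k := by
    by_contra! hk
    interval_cases k <;> omega
  simpa [mul_comm] using Nat.mul_le_mul_left d hk

theorem card_divisors_le_card_properDivisors_add_one (n : ℕ) :
    #n.divisors ≤ #n.properDivisors + 1 := by
  rcases eq_or_ne n 0 with rfl | hn
  · simp
  · rw [← insert_self_properDivisors hn]
    exact card_insert_le _ _

theorem filter_odd_divisors_two_mul_sub_one (n : ℕ) :
    (2 * n - 1).divisors.filter Odd = (2 * n - 1).divisors := by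
  refine filter_true_of_mem fun d hd => ?_
  obtain ⟨hdvd, hne⟩ := mem_divisors.mp hd
  exact Odd.of_dvd_nat (odd_iff.mpr (by omega)) hdvd

end Nat

def IsGood (n x : ℕ) : Prop :=
  ∃ h ∈ Icc 1 x, h ∣ x ∧ (2 * x + 1) ∣ (2 * n - 2 * h + 1)

open Classical in
noncomputable def goodSet (n : ℕ) : Finset ℕ := (Ioo 0 n).filter (IsGood n)

theorem A_eq_one_add_card_goodSet (n : ℕ) : A n = 1 + #(goodSet n) := rfl

theorem mem_goodSet {n x : ℕ} : x ∈ goodSet n ↔ 0 < x ∧ x < n ∧ IsGood n x := by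
  simp [goodSet, and_assoc]

def properDivisorComplements (n : ℕ) : Finset ℕ := n.properDivisors.image (n - ·)

def halfOddDivisors (m : ℕ) : Finset ℕ := ((m.divisors.filter Odd).erase 1).image (· / 2)

theorem le_two_mul_of_mem_properDivisorComplements {n x : ℕ}
    (hx : x ∈ properDivisorComplements n) : n ≤ 2 * x ∧ x < n := by
  obtain ⟨d, hd, rfl⟩ := mem_image.mp hx
  have := Nat.two_mul_le_of_mem_properDivisors hd
  have := Nat.pos_of_mem_properDivisors hd
  omega

theorem mem_halfOddDivisors {m x : ℕ} :
    x ∈ halfOddDivisors m ↔ 0 < x ∧ 2 * x + 1 ∣ m ∧ m ≠ 0 := by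
  simp only [halfOddDivisors, mem_image, mem_erase, mem_filter, Nat.mem_divisors]
  constructor
  · rintro ⟨d, ⟨hd1, hdvd, hodd⟩, rfl⟩
    obtain ⟨k, rfl⟩ := hodd
    refine ⟨by omega, ?_⟩
    rwa [show 2 * ((2 * k + 1) / 2) + 1 = 2 * k + 1 by omega]
  · rintro ⟨hx, hdvd⟩
    exact ⟨2 * x + 1, ⟨by omega, hdvd, odd_two_mul_add_one x⟩, by omega⟩

theorem card_divisors_le_card_properDivisorComplements_add_one (n : ℕ) :
    #n.divisors ≤ #(properDivisorComplements n) + 1 := by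
  rw [properDivisorComplements, card_image_of_injOn]
  · exact Nat.card_divisors_le_card_properDivisors_add_one n
  intro a ha b hb hab
  have := (Nat.mem_properDivisors.mp ha).2
  have := (Nat.mem_properDivisors.mp hb).2
  simp only at hab
  omega

theorem card_filter_odd_divisors_le_card_halfOddDivisors_add_one (m : ℕ) :
    #(m.divisors.filter Odd) ≤ #(halfOddDivisors m) + 1 := by
  rw [halfOddDivisors, card_image_of_injOn]
  · have := pred_card_le_card_erase (s := m.divisors.filter Odd) (a := 1)
    omega
  intro a ha b hb hab
  obtain ⟨k, rfl⟩ := (mem_filter.mp (mem_of_mem_erase ha)).2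
  obtain ⟨l, rfl⟩ := (mem_filter.mp (mem_of_mem_erase hb)).2
  simp only at hab
  omega

theorem properDivisorComplements_subset_goodSet (n : ℕ) :
    properDivisorComplements n ⊆ goodSet n := by
  intro x hx
  obtain ⟨d, hd, rfl⟩ := mem_image.mp hx
  obtain ⟨hdvd, hlt⟩ := Nat.mem_properDivisors.mp hd
  have h2d := Nat.two_mul_le_of_mem_properDivisors hd
  have hd0 := Nat.pos_of_mem_properDivisors hd
  refine mem_goodSet.mpr ⟨by omega, by omega, d, mem_Icc.mpr ⟨hd0, by omega⟩,
    Nat.dvd_sub hdvd dvd_rfl, ?_⟩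
  rw [show 2 * n - 2 * d + 1 = 2 * (n - d) + 1 by omega]

theorem halfOddDivisors_two_mul_sub_one_subset_goodSet (n : ℕ) :
    halfOddDivisors (2 * n - 1) ⊆ goodSet n := by
  intro x hx
  obtain ⟨hx0, hdvd, hne⟩ := mem_halfOddDivisors.mp hx
  have := Nat.le_of_dvd (by omega) hdvd
  refine mem_goodSet.mpr ⟨hx0, by omega, 1, mem_Icc.mpr ⟨le_rfl, hx0⟩, one_dvd x, ?_⟩
  rwa [show 2 * n - 2 * 1 + 1 = 2 * n - 1 by omega]

theorem halfOddDivisors_succ_subset_goodSet (n : ℕ) :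
    halfOddDivisors (n + 1) ⊆ goodSet n := by
  intro x hx
  obtain ⟨hx0, hdvd, -⟩ := mem_halfOddDivisors.mp hx
  have := Nat.le_of_dvd (by omega) hdvd
  refine mem_goodSet.mpr ⟨hx0, by omega, x, mem_Icc.mpr ⟨hx0, le_rfl⟩, dvd_rfl, ?_⟩
  rw [show 2 * n - 2 * x + 1 = 2 * (n + 1) - (2 * x + 1) by omega]
  exact Nat.dvd_sub (hdvd.mul_left 2) dvd_rfl

theorem card_halfOddDivisors_two_mul_sub_one_inter_properDivisorComplements_le (n : ℕ) :
    #(halfOddDivisors (2 * n - 1) ∩ properDivisorComplements n) ≤ 1 := by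
  refine card_le_one_iff_subset_singleton.mpr ⟨n - 1, fun x hx => mem_singleton.mpr ?_⟩
  obtain ⟨hx2, hx3⟩ := mem_inter.mp hx
  obtain ⟨-, hdvd, hne⟩ := mem_halfOddDivisors.mp hx2
  have := le_two_mul_of_mem_properDivisorComplements hx3
  have := Nat.eq_of_dvd_of_lt_two_mul hne hdvd (by omega)
  omega

theorem card_halfOddDivisors_succ_inter_properDivisorComplements_le (n : ℕ) :
    #(halfOddDivisors (n + 1) ∩ properDivisorComplements n) ≤ if n % 2 = 0 then 1 else 0 := by
  refine card_le_ite_of_forall_eq (a := n / 2) fun x hx => ?_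
  obtain ⟨hx1, hx3⟩ := mem_inter.mp hx
  obtain ⟨-, hdvd, -⟩ := mem_halfOddDivisors.mp hx1
  have := le_two_mul_of_mem_properDivisorComplements hx3
  have := Nat.eq_of_dvd_of_lt_two_mul n.succ_ne_zero hdvd (by omega)
  omega

theorem card_halfOddDivisors_succ_inter_halfOddDivisors_two_mul_sub_one_le (n : ℕ) :
    #(halfOddDivisors (n + 1) ∩ halfOddDivisors (2 * n - 1)) ≤
      if n % 3 = 2 then 1 else 0 := by
  refine card_le_ite_of_forall_eq (a := 1) fun x hx => ?_
  obtain ⟨hx1, hx2⟩ := mem_inter.mp hx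
  obtain ⟨hx0, hdvd1, -⟩ := mem_halfOddDivisors.mp hx1
  obtain ⟨-, hdvd2, hne⟩ := mem_halfOddDivisors.mp hx2
  have hdvd3 : 2 * x + 1 ∣ 3 := by
    rw [show 3 = 2 * (n + 1) - (2 * n - 1) by omega]
    exact Nat.dvd_sub (hdvd1.mul_left 2) hdvd2
  have := Nat.le_of_dvd three_pos hdvd3
  obtain rfl : x = 1 := by omega
  omega

theorem A_lower_bound_general (n : ℕ) :
    (A n : ℤ) ≥ (n.divisors.card : ℤ) + ((2 * n - 1).divisors.card : ℤ) +
      (((n + 1).divisors.filter (fun d => Odd d)).card : ℤ) - 3 -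
      (if n % 2 = 0 then 1 else 0) - (if n % 3 = 2 then 1 else 0) := by
  have hunion : #(halfOddDivisors (n + 1) ∪ halfOddDivisors (2 * n - 1) ∪
      properDivisorComplements n) ≤ #(goodSet n) :=
    card_le_card <| union_subset
      (union_subset (halfOddDivisors_succ_subset_goodSet n)
        (halfOddDivisors_two_mul_sub_one_subset_goodSet n))
      (properDivisorComplements_subset_goodSet n)
  have hincl := card_add_card_add_card_le (halfOddDivisors (n + 1))
    (halfOddDivisors (2 * n - 1)) (properDivisorComplements n)
  have hτ := card_divisors_le_card_properDivisorComplements_add_one n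
  have hτ' := card_filter_odd_divisors_le_card_halfOddDivisors_add_one (2 * n - 1)
  rw [Nat.filter_odd_divisors_two_mul_sub_one] at hτ'
  have hτo : #((n + 1).divisors.filter fun d => Odd d) ≤ #(halfOddDivisors (n + 1)) + 1 :=
    card_filter_odd_divisors_le_card_halfOddDivisors_add_one (n + 1)
  have h12 := card_halfOddDivisors_succ_inter_halfOddDivisors_two_mul_sub_one_le n
  have h13 := card_halfOddDivisors_succ_inter_properDivisorComplements_le n
  have h23 := card_halfOddDivisors_two_mul_sub_one_inter_properDivisorComplements_le n
  rw [A_eq_one_add_card_goodSet]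
  split_ifs at h12 h13 ⊢ <;> omega

theorem A_lower_bound (n : ℕ) (hn : 1 ≤ n) :
    (A n : ℤ) ≥ (n.divisors.card : ℤ) + ((2 * n - 1).divisors.card : ℤ) +
      (((n + 1).divisors.filter (fun d => Odd d)).card : ℤ) - 3 -
      (if n % 2 = 0 then 1 else 0) - (if n % 3 = 2 then 1 else 0) :=
  A_lower_bound_general n
end

section
/- For every n ≥ 1, the number of triples (x,y,z) of integers with x ≥ 0, y ≥ 1, z ≥ 1 satisfying n = 2xyz + yz + x + y equals a(n) − 1, where a(n) = 1 + #{x : 1 ≤ x ≤ n−1 and ∃ h ≥ 1 with h | x and (2x+1) | (2n−2h+1)}. -/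
open Classical in
noncomputable def admissibleSet (n : ℕ) : Finset ℕ :=
  (Finset.Ioo 0 n).filter
    (fun x => ∃ h ∈ Finset.Icc 1 x, h ∣ x ∧ (2 * x + 1) ∣ (2 * n - 2 * h + 1))

theorem A_eq_one_add_card (n : ℕ) : A n = 1 + (admissibleSet n).card := by
  unfold A admissibleSet
  congr

def solutionSet (n : ℕ) : Set (ℕ × ℕ × ℕ) :=
  {t | 1 ≤ t.2.1 ∧ 1 ≤ t.2.2 ∧ n = 2 * t.1 * t.2.1 * t.2.2 + t.2.1 * t.2.2 + t.1 + t.2.1}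

theorem two_mul_mul_mul_add_eq (x y z : ℕ) :
    2 * x * y * z + y * z + x + y = (2 * (y * z) + 1) * x + y * z + y := by
  ring

theorem Nat.eq_and_eq_of_mul_add_eq_mul_add {k q r q' r' : ℕ} (hr : r < k) (hr' : r' < k)
    (h : k * q + r = k * q' + r') : q = q' ∧ r = r' := by
  have hk : 0 < k := by omega
  constructor
  · simpa [Nat.mul_add_div hk, Nat.div_eq_of_lt hr, Nat.div_eq_of_lt hr'] using
      congrArg (· / k) h
  · simpa [Nat.mul_add_mod, Nat.mod_eq_of_lt hr, Nat.mod_eq_of_lt hr'] using congrArg (· % k) h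

theorem dvd_two_mul_sub_add_one_iff {n X h : ℕ} (hhX : h ≤ X) :
    2 * X + 1 ∣ 2 * n - 2 * h + 1 ↔ ∃ x, n = (2 * X + 1) * x + X + h := by
  constructor
  · rintro ⟨q, hq⟩
    have hhn : h ≤ n := by
      -- otherwise the truncated subtraction makes the left side `1`
      by_contra hnh
      have : 2 * X + 1 ∣ 1 := ⟨q, by omega⟩
      have := Nat.le_of_dvd one_pos this
      omega
    have hodd : Odd ((2 * X + 1) * q) := hq ▸ ⟨n - h, by omega⟩
    obtain ⟨x, rfl⟩ := (Nat.odd_mul.mp hodd).2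
    have : (2 * X + 1) * (2 * x + 1) = 2 * ((2 * X + 1) * x) + 2 * X + 1 := by ring
    exact ⟨x, by omega⟩
  · rintro ⟨x, rfl⟩
    have : (2 * X + 1) * (2 * x + 1) = 2 * ((2 * X + 1) * x) + 2 * X + 1 := by ring
    exact ⟨2 * x + 1, by omega⟩

theorem injOn_solutionSet (n : ℕ) :
    Set.InjOn (fun t : ℕ × ℕ × ℕ => t.2.1 * t.2.2) (solutionSet n) := by
  rintro ⟨x, y, z⟩ ⟨hy, hz, hn⟩ ⟨x', y', z'⟩ ⟨hy', hz', hn'⟩ (hX : y * z = y' * z')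
  dsimp only at *
  rw [two_mul_mul_mul_add_eq] at hn hn'
  have hyX : y ≤ y * z := Nat.le_mul_of_pos_right y hz
  have hyX' : y' ≤ y' * z' := Nat.le_mul_of_pos_right y' hz'
  rw [hX] at hn hyX
  obtain ⟨rfl, hyy⟩ := Nat.eq_and_eq_of_mul_add_eq_mul_add (k := 2 * (y' * z') + 1)
    (q := x) (r := y' * z' + y) (q' := x') (r' := y' * z' + y') (by omega) (by omega) (by omega)
  obtain rfl : y = y' := by omega
  obtain rfl : z = z' := Nat.eq_of_mul_eq_mul_left hy hX
  rfl

theorem image_solutionSet (n : ℕ) :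
    (fun t : ℕ × ℕ × ℕ => t.2.1 * t.2.2) '' solutionSet n = admissibleSet n := by
  ext X
  simp only [Set.mem_image, admissibleSet, Finset.coe_filter, Set.mem_ofPred_eq,
    Finset.mem_Ioo, Finset.mem_Icc, solutionSet, Prod.exists]
  constructor
  · rintro ⟨x, y, z, ⟨hy, hz, hn⟩, rfl⟩
    rw [two_mul_mul_mul_add_eq] at hn
    have hyX : y ≤ y * z := Nat.le_mul_of_pos_right y hz
    exact ⟨⟨by omega, by omega⟩, y, ⟨hy, hyX⟩, dvd_mul_right y z,
      (dvd_two_mul_sub_add_one_iff hyX).2 ⟨x, hn⟩⟩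
  · rintro ⟨⟨hX, -⟩, h, ⟨hh, hhX⟩, ⟨z, rfl⟩, hdvd⟩
    obtain ⟨x, hx⟩ := (dvd_two_mul_sub_add_one_iff hhX).1 hdvd
    refine ⟨x, h, z, ⟨hh, Nat.pos_of_mul_pos_left hX, ?_⟩, rfl⟩
    rwa [two_mul_mul_mul_add_eq]

theorem diophantine_count_general (n : ℕ) :
    Nat.card {t : ℕ × ℕ × ℕ // 1 ≤ t.2.1 ∧ 1 ≤ t.2.2 ∧
      n = 2 * t.1 * t.2.1 * t.2.2 + t.2.1 * t.2.2 + t.1 + t.2.1} = A n - 1 := by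
  change Nat.card (solutionSet n) = A n - 1
  rw [Nat.card_coe_set_eq, ← (injOn_solutionSet n).ncard_image,
    image_solutionSet, Set.ncard_coe_finset, A_eq_one_add_card, Nat.add_sub_cancel_left]

theorem diophantine_count (n : ℕ) (hn : 1 ≤ n) :
    Nat.card {t : ℕ × ℕ × ℕ // 1 ≤ t.2.1 ∧ 1 ≤ t.2.2 ∧
      n = 2 * t.1 * t.2.1 * t.2.2 + t.2.1 * t.2.2 + t.1 + t.2.1} = A n - 1 :=
  diophantine_count_general n
end
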